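/- Let $H$ be a Hilbert space, $E \subset H$ closed and convex, $T : E \to E$ nonexpansive with $T(E)$ relatively compact in $H$, and $d_k \in [0,1]$ with $\sum_k d_k(1-d_k) = \infty$. Suppose $T$ has a fixed point in $E$. Then for any $\phi_1 \in E$ the segmenting Mann sequence $\phi_{k+1} = (1-d_k)\phi_k + d_k T(\phi_k)$ converges strongly to a fixed point of $T$. -/

import Mathlib

/-!
Write `c k = ‖φ k - T (φ k)‖`. In a Hilbert space, for every fixed point `p`,
`‖φ (k+1) - p‖² + d k (1 - d k) c k² ≤ ‖φ k - p‖²`, so the distance to any fixed point is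
nonincreasing and `∑ d k (1 - d k) c k²` is finite. Nonexpansiveness makes `c` nonincreasing,
hence `c n² ∑_{k<n} d k (1 - d k)` stays bounded and the divergence of the series forces
`c → 0`. Compactness of `T(E)` gives a subsequence of `T ∘ φ`, hence of `φ`, converging to some
`q ∈ E`, which is then a fixed point; since `‖φ k - q‖` is nonincreasing, the whole sequence
converges to `q`.
-/

open Filter Topology

theorem tendsto_zero_of_antitone_of_sum_mul_le {c w : ℕ → ℝ} {B : ℝ} (hc : Antitone c)
    (hc0 : ∀ k, 0 ≤ c k) (hw : ∀ k, 0 ≤ w k) (hsum : ∀ n, ∑ k ∈ Finset.range n, w k * c k ≤ B)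
    (hdiv : Tendsto (fun n => ∑ k ∈ Finset.range n, w k) atTop atTop) :
    Tendsto c atTop (𝓝 0) := by
  have hbound : ∀ n, c n * ∑ k ∈ Finset.range n, w k ≤ B := fun n =>
    calc c n * ∑ k ∈ Finset.range n, w k
        ≤ ∑ k ∈ Finset.range n, w k * c k := by
          rw [Finset.mul_sum]
          refine Finset.sum_le_sum fun k hk => ?_
          rw [mul_comm]
          exact mul_le_mul_of_nonneg_left (hc (Finset.mem_range.mp hk).le) (hw k)
      _ ≤ B := hsum n
  refine squeeze_zero' (Eventually.of_forall hc0) ?_ ((tendsto_const_nhds (x := B)).div_atTop hdiv)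
  filter_upwards [hdiv.eventually_gt_atTop 0] with n hn
  exact (le_div_iff₀ hn).mpr (hbound n)

theorem Filter.Tendsto.of_antitone_dist_of_subseq {X : Type*} [PseudoMetricSpace X]
    {x : ℕ → X} {q : X} {g : ℕ → ℕ} (hx : Antitone fun k => dist (x k) q)
    (hg : StrictMono g) (hxg : Tendsto (x ∘ g) atTop (𝓝 q)) : Tendsto x atTop (𝓝 q) := by
  rw [tendsto_iff_dist_tendsto_zero] at hxg ⊢
  exact (tendsto_iff_tendsto_subseq_of_antitone hx hg.tendsto_atTop).mpr hxg

theorem exists_fixedPoint_tendsto_subseq_of_tendsto_dist_self {X : Type*} [MetricSpace X]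
    {E : Set X} {T : X → X} {x : ℕ → X} (hE : IsClosed E) (hT : ContinuousOn T E)
    (hcompact : IsCompact (closure (T '' E))) (hx : ∀ k, x k ∈ E)
    (hres : Tendsto (fun k => dist (x k) (T (x k))) atTop (𝓝 0)) :
    ∃ q ∈ E, T q = q ∧ ∃ g : ℕ → ℕ, StrictMono g ∧ Tendsto (x ∘ g) atTop (𝓝 q) := by
  obtain ⟨q, -, g, hg, hTg⟩ :=
    hcompact.tendsto_subseq fun k => subset_closure (Set.mem_image_of_mem T (hx k))
  have hxg : Tendsto (x ∘ g) atTop (𝓝 q) := by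
    refine hTg.congr_dist ?_
    simpa only [Function.comp_def, dist_comm] using hres.comp hg.tendsto_atTop
  have hqE : q ∈ E := hE.mem_of_tendsto hxg (Eventually.of_forall fun j => hx (g j))
  have hTxg : Tendsto (T ∘ x ∘ g) atTop (𝓝 (T q)) :=
    (hT q hqE).tendsto.comp
      (tendsto_nhdsWithin_iff.mpr ⟨hxg, Eventually.of_forall fun j => hx (g j)⟩)
  exact ⟨q, hqE, tendsto_nhds_unique hTxg hTg, g, hg, hxg⟩

theorem norm_one_sub_smul_add_smul_sq {H : Type*} [NormedAddCommGroup H] [InnerProductSpace ℝ H]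
    (t : ℝ) (u v : H) :
    ‖(1 - t) • u + t • v‖ ^ 2 = (1 - t) * ‖u‖ ^ 2 + t * ‖v‖ ^ 2 - t * (1 - t) * ‖u - v‖ ^ 2 := by
  rw [norm_add_sq_real, norm_sub_sq_real, norm_smul, norm_smul, real_inner_smul_left,
    real_inner_smul_right, Real.norm_eq_abs, Real.norm_eq_abs, mul_pow, mul_pow, sq_abs, sq_abs]
  ring

theorem norm_one_sub_smul_add_smul_sq_add_le {H : Type*} [NormedAddCommGroup H] [InnerProductSpace ℝ H]
    {t : ℝ} {u v : H} (ht : 0 ≤ t) (huv : ‖v‖ ≤ ‖u‖) :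
    ‖(1 - t) • u + t • v‖ ^ 2 + t * (1 - t) * ‖u - v‖ ^ 2 ≤ ‖u‖ ^ 2 := by
  have : ‖v‖ ^ 2 ≤ ‖u‖ ^ 2 := pow_le_pow_left₀ (norm_nonneg v) huv 2
  rw [norm_one_sub_smul_add_smul_sq]
  nlinarith

section MannIteration

variable {H : Type*} {E : Set H} {T : H → H} {d : ℕ → ℝ} {φ : ℕ → H}

theorem mann_mem [AddCommGroup H] [Module ℝ H] (hE : Convex ℝ E) (hmaps : Set.MapsTo T E E)
    (hd : ∀ k, 0 ≤ d k ∧ d k ≤ 1) (hrec : ∀ k, φ (k + 1) = (1 - d k) • φ k + d k • T (φ k))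
    (hφ0 : φ 0 ∈ E) : ∀ k, φ k ∈ E
  | 0 => hφ0
  | k + 1 => by
    have hφk := mann_mem hE hmaps hd hrec hφ0 k
    rw [hrec k]
    exact hE hφk (hmaps hφk) (by linarith [(hd k).2]) (hd k).1 (by ring)

variable [NormedAddCommGroup H]

theorem antitone_norm_mann_residual [NormedSpace ℝ H]
    (hT : ∀ x ∈ E, ∀ y ∈ E, ‖T x - T y‖ ≤ ‖x - y‖) (hd : ∀ k, 0 ≤ d k ∧ d k ≤ 1)
    (hrec : ∀ k, φ (k + 1) = (1 - d k) • φ k + d k • T (φ k)) (hφ : ∀ k, φ k ∈ E) :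
    Antitone fun k => ‖φ k - T (φ k)‖ := by
  refine antitone_nat_of_succ_le fun k => ?_
  obtain ⟨hd0, hd1⟩ := hd k
  have hstep : φ k - φ (k + 1) = d k • (φ k - T (φ k)) := by rw [hrec k]; module
  have hT' : ‖T (φ k) - T (φ (k + 1))‖ ≤ d k * ‖φ k - T (φ k)‖ := by
    simpa only [hstep, norm_smul, Real.norm_of_nonneg hd0] using hT _ (hφ k) _ (hφ (k + 1))
  calc ‖φ (k + 1) - T (φ (k + 1))‖
      = ‖(1 - d k) • (φ k - T (φ k)) + (T (φ k) - T (φ (k + 1)))‖ := by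
        rw [hrec k]; congr 1; module
    _ ≤ (1 - d k) * ‖φ k - T (φ k)‖ + d k * ‖φ k - T (φ k)‖ := by
        grw [norm_add_le, norm_smul, Real.norm_of_nonneg (by linarith), hT']
    _ = ‖φ k - T (φ k)‖ := by ring

variable [InnerProductSpace ℝ H]

theorem mann_norm_sub_fixedPoint_sq_add_le {p : H} (hpE : p ∈ E) (hTp : T p = p)
    (hT : ∀ x ∈ E, ∀ y ∈ E, ‖T x - T y‖ ≤ ‖x - y‖) (hd : ∀ k, 0 ≤ d k)
    (hrec : ∀ k, φ (k + 1) = (1 - d k) • φ k + d k • T (φ k)) (hφ : ∀ k, φ k ∈ E) (k : ℕ) :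
    ‖φ (k + 1) - p‖ ^ 2 + d k * (1 - d k) * ‖φ k - T (φ k)‖ ^ 2 ≤ ‖φ k - p‖ ^ 2 := by
  have hsplit : φ (k + 1) - p = (1 - d k) • (φ k - p) + d k • (T (φ k) - p) := by
    rw [hrec k]; module
  have hres : φ k - T (φ k) = (φ k - p) - (T (φ k) - p) := by abel
  rw [hsplit, hres]
  refine norm_one_sub_smul_add_smul_sq_add_le (hd k) ?_
  simpa only [hTp] using hT _ (hφ k) _ hpE

theorem antitone_norm_mann_sub_fixedPoint {p : H} (hpE : p ∈ E) (hTp : T p = p)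
    (hT : ∀ x ∈ E, ∀ y ∈ E, ‖T x - T y‖ ≤ ‖x - y‖) (hd : ∀ k, 0 ≤ d k ∧ d k ≤ 1)
    (hrec : ∀ k, φ (k + 1) = (1 - d k) • φ k + d k • T (φ k)) (hφ : ∀ k, φ k ∈ E) :
    Antitone fun k => ‖φ k - p‖ := by
  refine antitone_nat_of_succ_le fun k => ?_
  have hstep := mann_norm_sub_fixedPoint_sq_add_le hpE hTp hT (fun k => (hd k).1) hrec hφ k
  have : 0 ≤ d k * (1 - d k) * ‖φ k - T (φ k)‖ ^ 2 :=
    mul_nonneg (mul_nonneg (hd k).1 (by linarith [(hd k).2])) (sq_nonneg _)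
  exact (pow_le_pow_iff_left₀ (norm_nonneg _) (norm_nonneg _) two_ne_zero).mp (by linarith)

theorem sum_mann_residual_sq_le {p : H} (hpE : p ∈ E) (hTp : T p = p)
    (hT : ∀ x ∈ E, ∀ y ∈ E, ‖T x - T y‖ ≤ ‖x - y‖) (hd : ∀ k, 0 ≤ d k)
    (hrec : ∀ k, φ (k + 1) = (1 - d k) • φ k + d k • T (φ k)) (hφ : ∀ k, φ k ∈ E) (n : ℕ) :
    ∑ k ∈ Finset.range n, d k * (1 - d k) * ‖φ k - T (φ k)‖ ^ 2 ≤ ‖φ 0 - p‖ ^ 2 := by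
  suffices ∀ n, ∑ k ∈ Finset.range n, d k * (1 - d k) * ‖φ k - T (φ k)‖ ^ 2 + ‖φ n - p‖ ^ 2
      ≤ ‖φ 0 - p‖ ^ 2 from (le_add_of_nonneg_right (sq_nonneg _)).trans (this n)
  intro n
  induction n with
  | zero => simp
  | succ n ih =>
    rw [Finset.sum_range_succ]
    linarith [mann_norm_sub_fixedPoint_sq_add_le hpE hTp hT hd hrec hφ n]

theorem tendsto_norm_mann_residual {p : H} (hpE : p ∈ E) (hTp : T p = p)
    (hT : ∀ x ∈ E, ∀ y ∈ E, ‖T x - T y‖ ≤ ‖x - y‖) (hd : ∀ k, 0 ≤ d k ∧ d k ≤ 1)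
    (hdiv : Tendsto (fun n => ∑ k ∈ Finset.range n, d k * (1 - d k)) atTop atTop)
    (hrec : ∀ k, φ (k + 1) = (1 - d k) • φ k + d k • T (φ k)) (hφ : ∀ k, φ k ∈ E) :
    Tendsto (fun k => ‖φ k - T (φ k)‖) atTop (𝓝 0) := by
  have hsq : Tendsto (fun k => ‖φ k - T (φ k)‖ ^ 2) atTop (𝓝 0) :=
    tendsto_zero_of_antitone_of_sum_mul_le
      (fun m n hmn => pow_le_pow_left₀ (norm_nonneg _)
        (antitone_norm_mann_residual hT hd hrec hφ hmn) 2)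
      (fun k => sq_nonneg _) (fun k => mul_nonneg (hd k).1 (by linarith [(hd k).2]))
      (sum_mann_residual_sq_le hpE hTp hT (fun k => (hd k).1) hrec hφ) hdiv
  simpa only [Real.sqrt_sq (norm_nonneg _), Real.sqrt_zero] using hsq.sqrt

end MannIteration

theorem mann_strong_convergence_general
    {H : Type*} [NormedAddCommGroup H] [InnerProductSpace ℝ H]
    (E : Set H) (hEclosed : IsClosed E) (hEconv : Convex ℝ E)
    (T : H → H) (hmaps : Set.MapsTo T E E)
    (hTne : ∀ x ∈ E, ∀ y ∈ E, ‖T x - T y‖ ≤ ‖x - y‖)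
    (hcompact : IsCompact (closure (T '' E)))
    (hfix : ∃ x ∈ E, T x = x)
    (d : ℕ → ℝ) (hd01 : ∀ k, 0 ≤ d k ∧ d k ≤ 1)
    (hdiv : Tendsto (fun n => ∑ k ∈ Finset.range n, d k * (1 - d k))
      atTop atTop)
    (φ : ℕ → H) (hφ0 : φ 0 ∈ E)
    (hrec : ∀ k, φ (k + 1) = (1 - d k) • φ k + d k • T (φ k)) :
    ∃ x ∈ E, T x = x ∧ Tendsto φ atTop (nhds x) := by
  obtain ⟨p, hpE, hTp⟩ := hfix
  have hφ := mann_mem hEconv hmaps hd01 hrec hφ0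
  have hTcont : ContinuousOn T E :=
    (LipschitzOnWith.mk_one (by simpa only [dist_eq_norm] using hTne)).continuousOn
  have hres : Tendsto (fun k => dist (φ k) (T (φ k))) atTop (𝓝 0) := by
    simpa only [dist_eq_norm] using tendsto_norm_mann_residual hpE hTp hTne hd01 hdiv hrec hφ
  obtain ⟨q, hqE, hTq, g, hg, hφg⟩ :=
    exists_fixedPoint_tendsto_subseq_of_tendsto_dist_self hEclosed hTcont hcompact hφ hres
  refine ⟨q, hqE, hTq, hφg.of_antitone_dist_of_subseq ?_ hg⟩
  simpa only [dist_eq_norm] using antitone_norm_mann_sub_fixedPoint hqE hTq hTne hd01 hrec hφ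

/-- strong convergence of the segmenting Mann iteration of a
nonexpansive self-map of a closed convex set with relatively compact range. -/
theorem mann_strong_convergence
    {H : Type*} [NormedAddCommGroup H] [InnerProductSpace ℝ H] [CompleteSpace H]
    (E : Set H) (hEclosed : IsClosed E) (hEconv : Convex ℝ E)
    (T : H → H) (hmaps : Set.MapsTo T E E)
    (hTne : ∀ x ∈ E, ∀ y ∈ E, ‖T x - T y‖ ≤ ‖x - y‖)
    (hcompact : IsCompact (closure (T '' E)))
    (hfix : ∃ x ∈ E, T x = x)
    (d : ℕ → ℝ) (hd01 : ∀ k, 0 ≤ d k ∧ d k ≤ 1)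
    (hdiv : Tendsto (fun n => ∑ k ∈ Finset.range n, d k * (1 - d k))
      atTop atTop)
    (φ : ℕ → H) (hφ0 : φ 0 ∈ E)
    (hrec : ∀ k, φ (k + 1) = (1 - d k) • φ k + d k • T (φ k)) :
    ∃ x ∈ E, T x = x ∧ Tendsto φ atTop (nhds x) :=
  mann_strong_convergence_general E hEclosed hEconv T hmaps hTne hcompact hfix d hd01 hdiv φ hφ0
    hrec
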